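/- arXiv:1210.5659 — 3 statements merged into one kernel-verified Lean document; each statement's English description precedes it below -/
import Mathlib

section
/- There is no partial binary operator ∧ on WMTS such that for all WMTS S and all deterministic WMTS S₁, S₂: (1) whenever S₁∧S₂ is defined, S₁∧S₂ ≤_m S₁ and S₁∧S₂ ≤_m S₂; (2) whenever S ≤_m S₁ and S ≤_m S₂, then S₁∧S₂ is defined and S ≤_m S₁∧S₂; (3) d_m(S,S₁∧S₂) is bounded by a function of d_m(S,S₁) and d_m(S,S₂), i.e., there exists a function f : [0,∞)×[0,∞) → [0,∞) such that whenever S₁∧S₂ is defined and d_m(S,S₁) and d_m(S,S₂) are finite, then d_m(S,S₁∧S₂) ≤ f(d_m(S,S₁), d_m(S,S₂)). In particular, for any ∧ satisfying (1) and (2), the witnessing systems over one action a — S with single may-transition labeled (a,[1,2]), S₁ with single may-transition labeled (a,[0,1]), S₂ with single may-transition labeled (a,[2,3]) — satisfy d_m(S,S₁) = d_m(S,S₂) = 1 and d_m(S,S₁∧S₂) = ∞. -/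
/-!
A common refinement `C` of `S₁ = (a,[0,1])` and `S₂ = (a,[2,3])` has no transition out of its
initial state, since the label of such a transition would refine both `(a,[0,1])` and `(a,[2,3])`.
Hence the transition `(a,[1,2])` of `S` cannot be matched in `C` and `d_m(S,C) = ∞`, although `S`
is at distance `1` from both `S₁` and `S₂`. By (2) such a `C` exists, because the one-state system
without transitions refines both `S₁` and `S₂`; this contradicts (3).
-/

open scoped ENNReal

namespace WMTSQuant

/-- A closed extended-integer interval `[lo, hi]` with `lo ∈ ℤ ∪ {-∞}`,
`hi ∈ ℤ ∪ {∞}` and `lo ≤ hi`. -/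
structure EInterval where
  lo : EReal
  hi : EReal
  lo_mem : lo = ⊥ ∨ ∃ n : ℤ, lo = ((n : ℝ) : EReal)
  hi_mem : hi = ⊤ ∨ ∃ n : ℤ, hi = ((n : ℝ) : EReal)
  lo_le_hi : lo ≤ hi

/-- Specification labels 𝕂 = Σ × 𝕀. -/
abbrev SLabel (Act : Type) := Act × EInterval

/-- The refinement order ⊑ on specification labels. -/
def LabelLE {Act : Type} (k k' : SLabel Act) : Prop :=
  k.1 = k'.1 ∧ k'.2.lo ≤ k.2.lo ∧ k.2.hi ≤ k'.2.hi

/-- Implementation labels: singleton integer intervals. -/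
def IsImpLabel {Act : Type} (k : SLabel Act) : Prop :=
  ∃ n : ℤ, k.2.lo = ((n : ℝ) : EReal) ∧ k.2.hi = ((n : ℝ) : EReal)

/-- Truncation of an extended real to `[0,∞]`. -/
noncomputable def erealToNNE (x : EReal) : ℝ≥0∞ :=
  if x = ⊤ then ⊤ else ENNReal.ofReal x.toReal

open Classical in
/-- The label distance d_𝕂. -/
noncomputable def dK {Act : Type} (k ℓ : SLabel Act) : ℝ≥0∞ :=
  if k.1 = ℓ.1 then erealToNNE (max (ℓ.2.lo - k.2.lo) (max (k.2.hi - ℓ.2.hi) 0)) else ⊤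

/-- Weighted modal transition systems. -/
structure WMTS (Act : Type) where
  State : Type
  init : State
  may : State → SLabel Act → State → Prop
  must : State → SLabel Act → State → Prop
  must_may : ∀ s k s', must s k s' → ∃ ℓ, LabelLE k ℓ ∧ may s ℓ s'

variable {Act : Type}

/-- Implementations: `must = may`, all labels singleton integer intervals. -/
def WMTS.IsImplementation (S : WMTS Act) : Prop :=
  (∀ s k s', S.may s k s' ↔ S.must s k s') ∧
    ∀ s k s', S.must s k s' → IsImpLabel k

/-- (Boolean) modal refinement `S₁ ≤ₘ S₂`. -/
def Refines (S₁ S₂ : WMTS Act) : Prop :=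
  ∃ R : S₁.State → S₂.State → Prop, R S₁.init S₂.init ∧
    ∀ s₁ s₂, R s₁ s₂ →
      (∀ k₁ t₁, S₁.may s₁ k₁ t₁ →
        ∃ k₂ t₂, S₂.may s₂ k₂ t₂ ∧ LabelLE k₁ k₂ ∧ R t₁ t₂) ∧
      (∀ k₂ t₂, S₂.must s₂ k₂ t₂ →
        ∃ k₁ t₁, S₁.must s₁ k₁ t₁ ∧ LabelLE k₁ k₂ ∧ R t₁ t₂)

/-- Implementation semantics ⟦S⟧. -/
def Impl (S : WMTS Act) : Set (WMTS Act) :=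
  {I | I.IsImplementation ∧ Refines I S}

/-- The endofunction whose least fixed point is the modal refinement distance. -/
noncomputable def dmF (lam : ℝ≥0∞) (S₁ S₂ : WMTS Act) :
    (S₁.State → S₂.State → ℝ≥0∞) →o (S₁.State → S₂.State → ℝ≥0∞) where
  toFun f := fun s₁ s₂ =>
    max
      (⨆ k₁, ⨆ t₁, ⨆ _ : S₁.may s₁ k₁ t₁,
        ⨅ k₂, ⨅ t₂, ⨅ _ : S₂.may s₂ k₂ t₂, dK k₁ k₂ + lam * f t₁ t₂)
      (⨆ k₂, ⨆ t₂, ⨆ _ : S₂.must s₂ k₂ t₂,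
        ⨅ k₁, ⨅ t₁, ⨅ _ : S₁.must s₁ k₁ t₁, dK k₁ k₂ + lam * f t₁ t₂)
  monotone' := by
    intro f g hfg s₁ s₂
    dsimp only
    gcongr with k₁ t₁ h k₂ t₂ h' k₂ t₂ h k₁ t₁ h' <;> exact hfg _ _

/-- The modal refinement distance between states. -/
noncomputable def dm (lam : ℝ≥0∞) (S₁ S₂ : WMTS Act) :
    S₁.State → S₂.State → ℝ≥0∞ :=
  OrderHom.lfp (dmF lam S₁ S₂)

/-- The modal refinement distance between systems. -/
noncomputable def dmInit (lam : ℝ≥0∞) (S₁ S₂ : WMTS Act) : ℝ≥0∞ :=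
  dm lam S₁ S₂ S₁.init S₂.init

/-- The endofunction whose least fixed point is the implementation distance. -/
noncomputable def diF (lam : ℝ≥0∞) (I₁ I₂ : WMTS Act) :
    (I₁.State → I₂.State → ℝ≥0∞) →o (I₁.State → I₂.State → ℝ≥0∞) where
  toFun f := fun i₁ i₂ =>
    max
      (⨆ k₁, ⨆ j₁, ⨆ _ : I₁.must i₁ k₁ j₁,
        ⨅ k₂, ⨅ j₂, ⨅ _ : I₂.must i₂ k₂ j₂, dK k₁ k₂ + lam * f j₁ j₂)
      (⨆ k₂, ⨆ j₂, ⨆ _ : I₂.must i₂ k₂ j₂,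
        ⨅ k₁, ⨅ j₁, ⨅ _ : I₁.must i₁ k₁ j₁, dK k₁ k₂ + lam * f j₁ j₂)
  monotone' := by
    intro f g hfg i₁ i₂
    dsimp only
    gcongr with k₁ t₁ h k₂ t₂ h' k₂ t₂ h k₁ t₁ h' <;> exact hfg _ _

/-- The implementation distance between states of implementations. -/
noncomputable def di (lam : ℝ≥0∞) (I₁ I₂ : WMTS Act) :
    I₁.State → I₂.State → ℝ≥0∞ :=
  OrderHom.lfp (diF lam I₁ I₂)

/-- The implementation distance between implementations. -/
noncomputable def diInit (lam : ℝ≥0∞) (I₁ I₂ : WMTS Act) : ℝ≥0∞ :=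
  di lam I₁ I₂ I₁.init I₂.init

/-- The thorough refinement distance. -/
noncomputable def dt (lam : ℝ≥0∞) (S₁ S₂ : WMTS Act) : ℝ≥0∞ :=
  ⨆ I₁ ∈ Impl S₁, ⨅ I₂ ∈ Impl S₂, diInit lam I₁ I₂


/-- Pointwise sum of intervals. -/
noncomputable def EInterval.add (I J : EInterval) : EInterval where
  lo := I.lo + J.lo
  hi := I.hi + J.hi
  lo_mem := by
    rcases I.lo_mem with h | ⟨n, h⟩
    · exact Or.inl (by rw [h, EReal.bot_add])
    · rcases J.lo_mem with h' | ⟨m, h'⟩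
      · exact Or.inl (by rw [h', EReal.add_bot])
      · exact Or.inr ⟨n + m, by rw [h, h', ← EReal.coe_add]; norm_cast⟩
  hi_mem := by
    rcases I.hi_mem with h | ⟨n, h⟩
    · exact Or.inl (by rw [h, EReal.top_add_of_ne_bot]
                       rcases J.hi_mem with h' | ⟨m, h'⟩ <;> simp [h'])
    · rcases J.hi_mem with h' | ⟨m, h'⟩
      · exact Or.inl (by rw [h', EReal.add_top_of_ne_bot]; simp [h])
      · exact Or.inr ⟨n + m, by rw [h, h', ← EReal.coe_add]; norm_cast⟩
  lo_le_hi := add_le_add I.lo_le_hi J.lo_le_hi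

/-- Widening `I ± δ` of an interval. -/
noncomputable def EInterval.widen (I : EInterval) (δ : ℕ) : EInterval where
  lo := I.lo - ((δ : ℝ) : EReal)
  hi := I.hi + ((δ : ℝ) : EReal)
  lo_mem := by
    rcases I.lo_mem with h | ⟨n, h⟩
    · exact Or.inl (by rw [h, EReal.bot_sub])
    · exact Or.inr ⟨n - δ, by rw [h, ← EReal.coe_sub]; norm_cast⟩
  hi_mem := by
    rcases I.hi_mem with h | ⟨n, h⟩
    · exact Or.inl (by rw [h, EReal.top_add_of_ne_bot]; exact EReal.coe_ne_bot _)
    · exact Or.inr ⟨n + δ, by rw [h, ← EReal.coe_add]; norm_cast⟩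
  lo_le_hi := by
    refine le_trans ?_ (le_trans I.lo_le_hi ?_)
    · rw [sub_eq_add_neg]
      nth_rewrite 2 [show I.lo = I.lo + 0 by rw [add_zero]]
      refine add_le_add le_rfl ?_
      rw [← EReal.coe_neg, ← EReal.coe_zero, EReal.coe_le_coe_iff]
      simp
    · nth_rewrite 1 [show I.hi = I.hi + 0 by rw [add_zero]]
      refine add_le_add le_rfl ?_
      rw [← EReal.coe_zero, EReal.coe_le_coe_iff]
      simp



/-- Symmetrization of a hemimetric. -/
noncomputable def symDist {α : Type*} (d : α → α → ℝ≥0∞) : α → α → ℝ≥0∞ :=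
  fun x y => max (d x y) (d y x)

/-- Product distance. -/
noncomputable def prodDist {α β : Type*} (d : α → α → ℝ≥0∞) (e : β → β → ℝ≥0∞) :
    α × β → α × β → ℝ≥0∞ :=
  fun p q => d p.1 q.1 + e p.2 q.2

/-- (Sequential) compactness of a set with respect to an `ℝ≥0∞`-valued distance. -/
def CompactIn {α : Type*} (d : α → α → ℝ≥0∞) (A : Set α) : Prop :=
  ∀ u : ℕ → α, (∀ n, u n ∈ A) →
    ∃ x ∈ A, ∃ φ : ℕ → ℕ, StrictMono φ ∧
      Filter.Tendsto (fun n => d x (u (φ n))) Filter.atTop (nhds 0)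

/-- Compactly branching WMTS. -/
def CompactlyBranching (lam : ℝ≥0∞) (S : WMTS Act) : Prop :=
  ∀ s : S.State,
    CompactIn (prodDist (symDist (dm lam S S)) (symDist dK))
      {p : S.State × SLabel Act | S.may s p.2 p.1} ∧
    CompactIn (prodDist (symDist (dm lam S S)) (symDist dK))
      {p : S.State × SLabel Act | S.must s p.2 p.1}

/-- Deterministic WMTS. -/
def Deterministic (S : WMTS Act) : Prop :=
  ∀ (s : S.State) (a : Act) (I₁ I₂ : EInterval) (t₁ t₂ : S.State),
    S.may s (a, I₁) t₁ → S.may s (a, I₂) t₂ → I₁ = I₂ ∧ t₁ = t₂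

/-- `S'` is an ε-relaxation of `S`. -/
def Relaxation (lam ε : ℝ≥0∞) (S S' : WMTS Act) : Prop :=
  Refines S S' ∧ dmInit lam S' S ≤ ε

/-- The ε-extended implementation semantics ⟦S⟧⁺ᵉ. -/
def ImplExt (lam ε : ℝ≥0∞) (S : WMTS Act) : Set (WMTS Act) :=
  {I | I.IsImplementation ∧ dmInit lam I S ≤ ε}

/-- The δ-widening S⁺δ of a WMTS. -/
noncomputable def WMTS.widen (S : WMTS Act) (δ : ℕ) : WMTS Act where
  State := S.State
  init := S.init
  may s k t := ∃ a I, S.may s (a, I) t ∧ k = (a, I.widen δ)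
  must s k t := ∃ a I, S.must s (a, I) t ∧ k = (a, I.widen δ)
  must_may := by
    rintro s k t ⟨a, I, h, rfl⟩
    obtain ⟨ℓ, hle, hmay⟩ := S.must_may _ _ _ h
    refine ⟨(ℓ.1, ℓ.2.widen δ), ⟨hle.1, ?_, ?_⟩, ℓ.1, ℓ.2, hmay, rfl⟩
    · exact EReal.sub_le_sub hle.2.1 le_rfl
    · exact add_le_add hle.2.2 le_rfl

/-- Definedness of label synchronization ⊕. -/
def OplusDefined (k ℓ : SLabel Act) : Prop := k.1 = ℓ.1

/-- Label synchronization ⊕ (adding the intervals). -/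
noncomputable def oplus (k ℓ : SLabel Act) : SLabel Act :=
  (k.1, k.2.add ℓ.2)

/-- Definedness of label quotient ⊖ (equal actions, the difference interval is a
valid extended-integer interval). -/
def OminusDefined (k ℓ : SLabel Act) : Prop :=
  k.1 = ℓ.1 ∧ k.2.lo - ℓ.2.lo ≤ k.2.hi - ℓ.2.hi ∧
    (k.2.lo - ℓ.2.lo = ⊥ ∨ ∃ n : ℤ, k.2.lo - ℓ.2.lo = ((n : ℝ) : EReal)) ∧
    (k.2.hi - ℓ.2.hi = ⊤ ∨ ∃ n : ℤ, k.2.hi - ℓ.2.hi = ((n : ℝ) : EReal))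

/-- Label quotient ⊖. -/
noncomputable def ominus (k ℓ : SLabel Act) (h : OminusDefined k ℓ) : SLabel Act :=
  (k.1, ⟨k.2.lo - ℓ.2.lo, k.2.hi - ℓ.2.hi, h.2.2.1, h.2.2.2, h.2.1⟩)

/-- Structural composition S₁ ∥ S₂ (CSP-style synchronization, adding weights). -/
noncomputable def par (S₁ S₂ : WMTS Act) : WMTS Act where
  State := S₁.State × S₂.State
  init := (S₁.init, S₂.init)
  may p k q := ∃ k₁ k₂, S₁.may p.1 k₁ q.1 ∧ S₂.may p.2 k₂ q.2 ∧
    OplusDefined k₁ k₂ ∧ k = oplus k₁ k₂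
  must p k q := ∃ k₁ k₂, S₁.must p.1 k₁ q.1 ∧ S₂.must p.2 k₂ q.2 ∧
    OplusDefined k₁ k₂ ∧ k = oplus k₁ k₂
  must_may := by
    rintro p k q ⟨k₁, k₂, h₁, h₂, hd, rfl⟩
    obtain ⟨ℓ₁, hle₁, hmay₁⟩ := S₁.must_may _ _ _ h₁
    obtain ⟨ℓ₂, hle₂, hmay₂⟩ := S₂.must_may _ _ _ h₂
    refine ⟨oplus ℓ₁ ℓ₂, ⟨?_, ?_, ?_⟩,
      ℓ₁, ℓ₂, hmay₁, hmay₂, by rw [OplusDefined, ← hle₁.1, ← hle₂.1]; exact hd, rfl⟩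
    · exact hle₁.1
    · exact add_le_add hle₁.2.1 hle₂.2.1
    · exact add_le_add hle₁.2.2 hle₂.2.2

section Quotient

variable (S₁ S₂ : WMTS Act)

/-- May transitions of the (unpruned) quotient; `none` is the universal state u. -/
def qmay : Option (S₁.State × S₂.State) → SLabel Act → Option (S₁.State × S₂.State) → Prop
  | some p, k, some q =>
      (∃ k₁ k₂, ∃ h : OminusDefined k₁ k₂,
        S₁.may p.1 k₁ q.1 ∧ S₂.may p.2 k₂ q.2 ∧ k = ominus k₁ k₂ h) ∨
      (∃ k₁ k₂, ∃ h : OminusDefined k₁ k₂,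
        S₁.must p.1 k₁ q.1 ∧ S₂.must p.2 k₂ q.2 ∧ k = ominus k₁ k₂ h)
  | some p, k, none => ∀ k₂ t₂, S₂.may p.2 k₂ t₂ → ¬ OplusDefined k k₂
  | none, _, none => True
  | none, _, some _ => False

/-- Must transitions of the (unpruned) quotient. -/
def qmust : Option (S₁.State × S₂.State) → SLabel Act → Option (S₁.State × S₂.State) → Prop
  | some p, k, some q =>
      ∃ k₁ k₂, ∃ h : OminusDefined k₁ k₂,
        S₁.must p.1 k₁ q.1 ∧ S₂.must p.2 k₂ q.2 ∧ k = ominus k₁ k₂ h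
  | _, _, _ => False

/-- Inconsistent states of the quotient. -/
def QBad : Option (S₁.State × S₂.State) → Prop
  | some p => ∃ k₁ t₁, S₁.must p.1 k₁ t₁ ∧
      ∀ k₂ t₂, S₂.must p.2 k₂ t₂ → ¬ OminusDefined k₁ k₂
  | none => False

/-- States removed by pruning: those that can reach an inconsistent state via
must transitions (reflexive-transitive closure of `pre`). -/
def QPruned (p : Option (S₁.State × S₂.State)) : Prop :=
  ∃ q, Relation.ReflTransGen (fun x y => ∃ k, qmust S₁ S₂ x k y) p q ∧ QBad S₁ S₂ q

/-- The quotient S₁ ⫽ S₂, defined whenever the initial state survives pruning. -/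
noncomputable def quotient' (h : ¬ QPruned S₁ S₂ (some (S₁.init, S₂.init))) :
    WMTS Act where
  State := {p : Option (S₁.State × S₂.State) // ¬ QPruned S₁ S₂ p}
  init := ⟨some (S₁.init, S₂.init), h⟩
  may p k q := qmay S₁ S₂ p.1 k q.1
  must p k q := qmust S₁ S₂ p.1 k q.1
  must_may := by
    rintro ⟨p, hp⟩ k ⟨q, hq⟩ hmust
    refine ⟨k, ⟨rfl, le_rfl, le_rfl⟩, ?_⟩
    cases p with
    | none => exact hmust.elim
    | some p =>
      cases q with
      | none => exact hmust.elim
      | some q => exact Or.inr hmust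

end Quotient

/-- Formulae of the logic L. -/
inductive Formula (Act : Type) where
  | tt : Formula Act
  | ff : Formula Act
  | diam : SLabel Act → Formula Act → Formula Act
  | box : SLabel Act → Formula Act → Formula Act
  | and : Formula Act → Formula Act → Formula Act
  | or : Formula Act → Formula Act → Formula Act

/-- Disjunction-free formulae. -/
def Formula.DisjFree : Formula Act → Prop
  | .tt => True
  | .ff => True
  | .diam _ φ => φ.DisjFree
  | .box _ φ => φ.DisjFree
  | .and φ ψ => φ.DisjFree ∧ ψ.DisjFree
  | .or _ _ => False

/-- Quantitative semantics ⟦φ⟧ : S → [0,∞] of the logic L. -/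
noncomputable def sem (lam : ℝ≥0∞) (S : WMTS Act) : Formula Act → S.State → ℝ≥0∞
  | .tt, _ => 0
  | .ff, _ => ⊤
  | .and φ ψ, s => max (sem lam S φ s) (sem lam S ψ s)
  | .or φ ψ, s => min (sem lam S φ s) (sem lam S ψ s)
  | .diam ℓ φ, s =>
      ⨅ k, ⨅ t, ⨅ _ : S.must s k t ∧ dK k ℓ ≠ ⊤, dK k ℓ + lam * sem lam S φ t
  | .box ℓ φ, s =>
      ⨆ k, ⨆ t, ⨆ _ : S.may s k t ∧ dK k ℓ ≠ ⊤, dK k ℓ + lam * sem lam S φ t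

/-- ⟦φ⟧S = ⟦φ⟧s⁰. -/
noncomputable def semInit (lam : ℝ≥0∞) (S : WMTS Act) (φ : Formula Act) : ℝ≥0∞ :=
  sem lam S φ S.init


/-- The extended-integer interval [x,y] for integers x ≤ y. -/
noncomputable def mkInterval (x y : ℤ) (h : x ≤ y) : EInterval :=
  ⟨((x : ℝ) : EReal), ((y : ℝ) : EReal), Or.inr ⟨x, rfl⟩, Or.inr ⟨y, rfl⟩,
    EReal.coe_le_coe_iff.mpr (by exact_mod_cast h)⟩

/-- A WMTS with one may-transition (labelled by action `a` and interval [x,y])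
and no must-transitions. -/
noncomputable def single (a : Act) (x y : ℤ) (h : x ≤ y) : WMTS Act where
  State := Bool
  init := false
  may s k t := s = false ∧ t = true ∧ k = (a, mkInterval x y h)
  must _ _ _ := False
  must_may := fun _ _ _ h => h.elim

theorem erealToNNE_coe (r : ℝ) : erealToNNE r = ENNReal.ofReal r := by
  simp [erealToNNE]

theorem dK_mkInterval (a : Act) (x y x' y' : ℤ) (h : x ≤ y) (h' : x' ≤ y') :
    dK ((a, mkInterval x y h) : SLabel Act) (a, mkInterval x' y' h') =
      ENNReal.ofReal (max ((x' : ℝ) - x) (max ((y : ℝ) - y') 0)) := by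
  have hmax : max (((x' : ℝ) : EReal) - (x : ℝ)) (max (((y : ℝ) : EReal) - (y' : ℝ)) 0) =
      ((max ((x' : ℝ) - x) (max ((y : ℝ) - y') 0) : ℝ) : EReal) := by
    simp only [← EReal.coe_sub, ← EReal.coe_zero, EReal.coe_strictMono.monotone.map_max]
  rw [dK, if_pos rfl]
  exact (congrArg erealToNNE hmax).trans (erealToNNE_coe _)

def WMTS.nil (Act : Type) : WMTS Act where
  State := Unit
  init := ()
  may _ _ _ := False
  must _ _ _ := False
  must_may := fun _ _ _ h => h.elim

theorem nil_refines {S : WMTS Act} (h : ∀ k t, ¬ S.must S.init k t) :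
    Refines (WMTS.nil Act) S :=
  ⟨fun _ s => s = S.init, rfl, fun _ _ hs =>
    ⟨fun _ _ hmay => hmay.elim, fun k t hmust => (h k t (hs ▸ hmust)).elim⟩⟩

theorem single_deterministic (a : Act) (x y : ℤ) (h : x ≤ y) :
    Deterministic (single a x y h) := by
  rintro _ _ I₁ I₂ t₁ t₂ ⟨-, rfl, h₁⟩ ⟨-, rfl, h₂⟩
  exact ⟨(congrArg Prod.snd h₁).trans (congrArg Prod.snd h₂).symm, rfl⟩

theorem dm_apply (lam : ℝ≥0∞) (S₁ S₂ : WMTS Act) (s₁ : S₁.State) (s₂ : S₂.State) :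
    dm lam S₁ S₂ s₁ s₂ = max
      (⨆ k₁, ⨆ t₁, ⨆ _ : S₁.may s₁ k₁ t₁,
        ⨅ k₂, ⨅ t₂, ⨅ _ : S₂.may s₂ k₂ t₂, dK k₁ k₂ + lam * dm lam S₁ S₂ t₁ t₂)
      (⨆ k₂, ⨆ t₂, ⨆ _ : S₂.must s₂ k₂ t₂,
        ⨅ k₁, ⨅ t₁, ⨅ _ : S₁.must s₁ k₁ t₁, dK k₁ k₂ + lam * dm lam S₁ S₂ t₁ t₂) :=
  congrFun₂ (OrderHom.map_lfp (dmF lam S₁ S₂)).symm s₁ s₂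

theorem dm_eq_zero {lam : ℝ≥0∞} {S₁ S₂ : WMTS Act} {s₁ : S₁.State} {s₂ : S₂.State}
    (h₁ : ∀ k t, ¬ S₁.may s₁ k t) (h₂ : ∀ k t, ¬ S₂.must s₂ k t) :
    dm lam S₁ S₂ s₁ s₂ = 0 := by
  rw [dm_apply]
  simp [h₁, h₂]

theorem dm_eq_top {lam : ℝ≥0∞} {S₁ S₂ : WMTS Act} {s₁ : S₁.State} {s₂ : S₂.State}
    {k : SLabel Act} {t : S₁.State} (hk : S₁.may s₁ k t) (h₂ : ∀ k t, ¬ S₂.may s₂ k t) :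
    dm lam S₁ S₂ s₁ s₂ = ⊤ := by
  rw [dm_apply, eq_top_iff]
  refine le_max_of_le_left (le_iSup₂_of_le k t (le_iSup_of_le hk ?_))
  simp [h₂]

theorem dmInit_single (lam : ℝ≥0∞) (a : Act) (x y x' y' : ℤ) (h : x ≤ y) (h' : x' ≤ y') :
    dmInit lam (single a x y h) (single a x' y' h') =
      dK ((a, mkInterval x y h) : SLabel Act) (a, mkInterval x' y' h') := by
  have hstop : dm lam (single a x y h) (single a x' y' h') true true = 0 :=
    dm_eq_zero (by simp [single]) (by simp [single])
  rw [dmInit, dm_apply]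
  simp only [single] at hstop ⊢
  simp [iSup_and, iInf_and, hstop]

theorem Refines.labelLE_single {C : WMTS Act} {a : Act} {x y : ℤ} {h : x ≤ y}
    (hC : Refines C (single a x y h)) {k : SLabel Act} {t : C.State} (hk : C.may C.init k t) :
    LabelLE k (a, mkInterval x y h) := by
  obtain ⟨R, hR₀, hR⟩ := hC
  obtain ⟨-, -, ⟨-, -, rfl⟩, hle, -⟩ := (hR _ _ hR₀).1 k t hk
  exact hle

theorem not_may_init_of_refines_single {C : WMTS Act} {a b : Act} {x y x' y' : ℤ}
    {h : x ≤ y} {h' : x' ≤ y'} (hC : Refines C (single a x y h))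
    (hC' : Refines C (single b x' y' h')) (hlt : y < x') (k : SLabel Act) (t : C.State) :
    ¬ C.may C.init k t := by
  intro hk
  have hle : ((x' : ℝ) : EReal) ≤ (y : ℝ) :=
    ((hC'.labelLE_single hk).2.1.trans k.2.lo_le_hi).trans (hC.labelLE_single hk).2.2
  exact hlt.not_ge (by exact_mod_cast hle)

theorem dmInit_eq_top_of_refines_single {lam : ℝ≥0∞} {S C : WMTS Act} {k : SLabel Act}
    {t : S.State} (hk : S.may S.init k t) {a b : Act} {x y x' y' : ℤ} {h : x ≤ y} {h' : x' ≤ y'}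
    (hC : Refines C (single a x y h)) (hC' : Refines C (single b x' y' h')) (hlt : y < x') :
    dmInit lam S C = ⊤ :=
  dm_eq_top hk (not_may_init_of_refines_single hC hC' hlt)

/-- there is no conjunction operator on WMTS which is a lower
bound, is defined on common refinements, and whose distance is bounded by a
function of the component distances; moreover, for any operator satisfying
the first two conditions, the concrete witnesses (a,[1,2]), (a,[0,1]),
(a,[2,3]) have d_m(S,S₁) = d_m(S,S₂) = 1 and d_m(S, S₁∧S₂) = ∞. -/
theorem no_conjunction_operator {Act : Type} [Nonempty Act] (lam : ℝ≥0∞) :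
    (¬ ∃ conj : WMTS Act → WMTS Act → Option (WMTS Act),
        (∀ S₁ S₂ C, Deterministic S₁ → Deterministic S₂ →
          conj S₁ S₂ = some C → Refines C S₁ ∧ Refines C S₂) ∧
        (∀ S S₁ S₂, Deterministic S₁ → Deterministic S₂ →
          Refines S S₁ → Refines S S₂ →
          ∃ C, conj S₁ S₂ = some C ∧ Refines S C) ∧
        (∃ f : ℝ≥0∞ → ℝ≥0∞ → ℝ≥0∞, (∀ x y, x < ⊤ → y < ⊤ → f x y < ⊤) ∧
          ∀ S S₁ S₂ C, Deterministic S₁ → Deterministic S₂ →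
            conj S₁ S₂ = some C →
            dmInit lam S S₁ < ⊤ → dmInit lam S S₂ < ⊤ →
            dmInit lam S C ≤ f (dmInit lam S S₁) (dmInit lam S S₂))) ∧
    (∀ conj : WMTS Act → WMTS Act → Option (WMTS Act),
      (∀ S₁ S₂ C, Deterministic S₁ → Deterministic S₂ →
        conj S₁ S₂ = some C → Refines C S₁ ∧ Refines C S₂) →
      (∀ S S₁ S₂, Deterministic S₁ → Deterministic S₂ →
        Refines S S₁ → Refines S S₂ →
        ∃ C, conj S₁ S₂ = some C ∧ Refines S C) →
      ∀ a : Act,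
        dmInit lam (single a 1 2 (by norm_num)) (single a 0 1 (by norm_num)) = 1 ∧
        dmInit lam (single a 1 2 (by norm_num)) (single a 2 3 (by norm_num)) = 1 ∧
        ∀ C, conj (single a 0 1 (by norm_num)) (single a 2 3 (by norm_num)) = some C →
          dmInit lam (single a 1 2 (by norm_num)) C = ⊤) := by
  have hdist₁ (a : Act) :
      dmInit lam (single a 1 2 (by norm_num)) (single a 0 1 (by norm_num)) = 1 := by
    rw [dmInit_single, dK_mkInterval]; norm_num
  have hdist₂ (a : Act) :
      dmInit lam (single a 1 2 (by norm_num)) (single a 2 3 (by norm_num)) = 1 := by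
    rw [dmInit_single, dK_mkInterval]; norm_num
  have htop (a : Act) (C : WMTS Act) (hC : Refines C (single a 0 1 (by norm_num)))
      (hC' : Refines C (single a 2 3 (by norm_num))) :
      dmInit lam (single a 1 2 (by norm_num)) C = ⊤ :=
    dmInit_eq_top_of_refines_single (t := true) ⟨rfl, rfl, rfl⟩ hC hC' (by norm_num)
  refine ⟨?_, fun conj hlower _ a => ⟨hdist₁ a, hdist₂ a, fun C hC =>
    (hlower _ _ C (single_deterministic _ _ _ _) (single_deterministic _ _ _ _) hC).elim
      (htop a C)⟩⟩
  rintro ⟨conj, hlower, hdefined, f, hf_finite, hf_bound⟩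
  obtain ⟨a⟩ := ‹Nonempty Act›
  obtain ⟨C, hC, -⟩ := hdefined (WMTS.nil Act) (single a 0 1 (by norm_num))
    (single a 2 3 (by norm_num)) (single_deterministic _ _ _ _) (single_deterministic _ _ _ _)
    (nil_refines fun _ _ => id) (nil_refines fun _ _ => id)
  obtain ⟨hC₁, hC₂⟩ :=
    hlower _ _ C (single_deterministic _ _ _ _) (single_deterministic _ _ _ _) hC
  have hbound := hf_bound _ _ _ C (single_deterministic _ _ _ _) (single_deterministic _ _ _ _)
    hC (hdist₁ a ▸ ENNReal.one_lt_top) (hdist₂ a ▸ ENNReal.one_lt_top)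
  rw [htop a C hC₁ hC₂, hdist₁, hdist₂, top_le_iff] at hbound
  exact (hf_finite 1 1 ENNReal.one_lt_top ENNReal.one_lt_top).ne hbound

end WMTSQuant
end

section
/- For all specification labels k₁, k₂, k₃, k₄ ∈ 𝕂 such that k₁⊕k₃ and k₂⊕k₄ are defined, d_𝕂(k₁⊕k₃, k₂⊕k₄) ≤ d_𝕂(k₁,k₂) + d_𝕂(k₃,k₄). -/
open scoped ENNReal

namespace WMTSQuant

variable {Act : Type}

lemma erealToNNE_eq_toENNReal : erealToNNE = EReal.toENNReal := rfl

namespace EInterval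

lemma lo_ne_top (I : EInterval) : I.lo ≠ ⊤ := by
  rcases I.lo_mem with h | ⟨n, h⟩ <;> simp [h]

lemma hi_ne_bot (I : EInterval) : I.hi ≠ ⊥ := by
  rcases I.hi_mem with h | ⟨n, h⟩ <;> simp [h]

/- Lower endpoints are never `⊤` and upper ones never `⊥`, so the `EReal` junk value
`⊤ - ⊤ = ⊥` cannot occur when endpoint gaps are split over a sum of intervals. -/
lemma add_lo_sub_add_lo (I₁ I₂ J₁ J₂ : EInterval) :
    (I₂.add J₂).lo - (I₁.add J₁).lo = (I₂.lo - I₁.lo) + (J₂.lo - J₁.lo) :=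
  EReal.add_sub_add_comm (Or.inr J₁.lo_ne_top) (Or.inl I₁.lo_ne_top)

lemma add_hi_sub_add_hi (I₁ I₂ J₁ J₂ : EInterval) :
    (I₁.add J₁).hi - (I₂.add J₂).hi = (I₁.hi - I₂.hi) + (J₁.hi - J₂.hi) :=
  EReal.add_sub_add_comm (Or.inl I₂.hi_ne_bot) (Or.inr J₂.hi_ne_bot)

end EInterval

lemma dK_of_fst_eq {k ℓ : SLabel Act} (h : k.1 = ℓ.1) :
    dK k ℓ = max (ℓ.2.lo - k.2.lo).toENNReal (k.2.hi - ℓ.2.hi).toENNReal := by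
  have mono : Monotone EReal.toENNReal := fun _ _ ↦ EReal.toENNReal_le_toENNReal
  rw [dK, if_pos h, erealToNNE_eq_toENNReal, mono.map_max, mono.map_max,
    EReal.toENNReal_zero, max_eq_left zero_le]

lemma dK_of_fst_ne {k ℓ : SLabel Act} (h : k.1 ≠ ℓ.1) : dK k ℓ = ⊤ := by
  rw [dK, if_neg h]

theorem dK_oplus_subadditive_general {Act : Type} (k₁ k₂ k₃ k₄ : SLabel Act) :
    dK (oplus k₁ k₃) (oplus k₂ k₄) ≤ dK k₁ k₂ + dK k₃ k₄ := by
  by_cases h₁₂ : k₁.1 = k₂.1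
  swap
  · simp [dK_of_fst_ne h₁₂]
  by_cases h₃₄ : k₃.1 = k₄.1
  swap
  · simp [dK_of_fst_ne h₃₄]
  rw [dK_of_fst_eq (k := oplus k₁ k₃) (ℓ := oplus k₂ k₄) h₁₂, dK_of_fst_eq h₁₂,
    dK_of_fst_eq h₃₄]
  simp only [oplus, EInterval.add_lo_sub_add_lo, EInterval.add_hi_sub_add_hi]
  exact (max_le_max EReal.toENNReal_add_le EReal.toENNReal_add_le).trans
    max_add_add_le_max_add_max

/-- the label distance is subadditive with respect to label
synchronization ⊕. -/
theorem dK_oplus_subadditive {Act : Type} (k₁ k₂ k₃ k₄ : SLabel Act)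
    (h₁₃ : OplusDefined k₁ k₃) (h₂₄ : OplusDefined k₂ k₄) :
    dK (oplus k₁ k₃) (oplus k₂ k₄) ≤ dK k₁ k₂ + dK k₃ k₄ :=
  dK_oplus_subadditive_general k₁ k₂ k₃ k₄

end WMTSQuant
end

section
/- Independent implementability: for all WMTS S₁, S₂, S₃, S₄, d_m(S₁∥S₃, S₂∥S₄) ≤ d_m(S₁,S₂) + d_m(S₃,S₄). -/
open scoped ENNReal

namespace WMTSQuant

variable {Act : Type}

/-! Since `dm` is a least fixed point, it suffices to check that
`(p, q) ↦ dm p.1 q.1 + dm p.2 q.2` is a pre-fixed point of the functional of `par S₁ S₃`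
and `par S₂ S₄`. A transition of a composition is a synchronised pair of component
transitions; answering each component separately and synchronising the answers gives an answer
in the composition, because `dK` is subadditive under `⊕`. If the two answers carry different
actions, they cannot be synchronised, but then one of the `dK` terms is already `∞`. -/

lemma erealToNNE_eq_toENNReal_s15 (x : EReal) : erealToNNE x = x.toENNReal := rfl

lemma fst_eq_of_dK_ne_top {k ℓ : SLabel Act} (h : dK k ℓ ≠ ⊤) : k.1 = ℓ.1 := by
  by_contra hne
  exact h (by rw [dK, if_neg hne])

lemma EInterval.lo_ne_top_s15 (I : EInterval) : I.lo ≠ ⊤ := by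
  rcases I.lo_mem with h | ⟨n, h⟩ <;> simp [h]

lemma EInterval.hi_ne_bot_s15 (I : EInterval) : I.hi ≠ ⊥ := by
  rcases I.hi_mem with h | ⟨n, h⟩ <;> simp [h]

lemma dK_oplus_le (k₁ k₂ k₃ k₄ : SLabel Act) :
    dK (oplus k₁ k₃) (oplus k₂ k₄) ≤ dK k₁ k₂ + dK k₃ k₄ := by
  by_cases hinf : dK k₁ k₂ + dK k₃ k₄ = ⊤
  · exact hinf ▸ le_top
  obtain ⟨h₁₂, h₃₄⟩ := ENNReal.add_ne_top.mp hinf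
  have h12 := fst_eq_of_dK_ne_top h₁₂
  rw [dK, if_pos (show (oplus k₁ k₃).1 = (oplus k₂ k₄).1 from h12), dK, if_pos h12, dK,
    if_pos (fst_eq_of_dK_ne_top h₃₄)]
  simp only [erealToNNE_eq_toENNReal_s15]
  have hlo : (oplus k₂ k₄).2.lo - (oplus k₁ k₃).2.lo =
      (k₂.2.lo - k₁.2.lo) + (k₄.2.lo - k₃.2.lo) :=
    EReal.add_sub_add_comm (Or.inr k₃.2.lo_ne_top_s15) (Or.inl k₁.2.lo_ne_top_s15)
  have hhi : (oplus k₁ k₃).2.hi - (oplus k₂ k₄).2.hi =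
      (k₁.2.hi - k₂.2.hi) + (k₃.2.hi - k₄.2.hi) :=
    EReal.add_sub_add_comm (Or.inl k₂.2.hi_ne_bot_s15) (Or.inr k₄.2.hi_ne_bot_s15)
  rw [hlo, hhi, ← EReal.toENNReal_add (le_max_of_le_right (le_max_right _ _))
    (le_max_of_le_right (le_max_right _ _))]
  refine EReal.toENNReal_le_toENNReal (max_le (add_le_add (le_max_left _ _) (le_max_left _ _))
    (max_le (add_le_add ?_ ?_) (add_nonneg ?_ ?_))) <;>
  exact le_max_of_le_right (by simp)

lemma dmF_dm (lam : ℝ≥0∞) (S T : WMTS Act) : dmF lam S T (dm lam S T) = dm lam S T :=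
  OrderHom.map_lfp _

section Transitions

variable (lam : ℝ≥0∞) (S T : WMTS Act) {s s' : S.State} {t t' : T.State} {k : SLabel Act}

lemma iInf_may_le_dm (h : S.may s k s') :
    ⨅ ℓ, ⨅ t', ⨅ _ : T.may t ℓ t', dK k ℓ + lam * dm lam S T s' t' ≤ dm lam S T s t :=
  (le_max_of_le_left (le_iSup₂_of_le k s' (le_iSup (fun _ : S.may s k s' => _) h))).trans_eq
    (congrFun₂ (dmF_dm lam S T) s t)

lemma iInf_must_le_dm (h : T.must t k t') :
    ⨅ ℓ, ⨅ s', ⨅ _ : S.must s ℓ s', dK ℓ k + lam * dm lam S T s' t' ≤ dm lam S T s t :=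
  (le_max_of_le_right (le_iSup₂_of_le k t' (le_iSup (fun _ : T.must t k t' => _) h))).trans_eq
    (congrFun₂ (dmF_dm lam S T) s t)

end Transitions

/-- Used with `d` equal to `dK` (may-transitions) and to `dK` with swapped arguments
(must-transitions); `R₁`, `R₂` are the answering components' transitions, and the left-hand
side ranges over their synchronisations. -/
lemma iInf_sync_le_add {α β : Type} (lam : ℝ≥0∞) (d : SLabel Act → SLabel Act → ℝ≥0∞)
    (hd : ∀ k₁ k₂ k₃ k₄, d (oplus k₁ k₃) (oplus k₂ k₄) ≤ d k₁ k₂ + d k₃ k₄)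
    (hfst : ∀ k ℓ, d k ℓ ≠ ⊤ → k.1 = ℓ.1)
    (R₁ : SLabel Act → α → Prop) (R₂ : SLabel Act → β → Prop) (g₁ : α → ℝ≥0∞) (g₂ : β → ℝ≥0∞)
    {kA kB : SLabel Act} (hAB : OplusDefined kA kB) :
    ⨅ k, ⨅ t : α × β, ⨅ _ : ∃ k₁ k₂, R₁ k₁ t.1 ∧ R₂ k₂ t.2 ∧ OplusDefined k₁ k₂ ∧
        k = oplus k₁ k₂, d (oplus kA kB) k + lam * (g₁ t.1 + g₂ t.2)
      ≤ (⨅ k₁, ⨅ t₁, ⨅ _ : R₁ k₁ t₁, d kA k₁ + lam * g₁ t₁) +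
        ⨅ k₂, ⨅ t₂, ⨅ _ : R₂ k₂ t₂, d kB k₂ + lam * g₂ t₂ := by
  refine ENNReal.le_iInf_add_iInf fun k₁ k₂ => ENNReal.le_iInf_add_iInf fun t₁ t₂ =>
    ENNReal.le_iInf_add_iInf fun h₁ h₂ => ?_
  by_cases hinf : d kA k₁ + d kB k₂ = ⊤
  · rw [add_add_add_comm, hinf, top_add]
    exact le_top
  obtain ⟨hA, hB⟩ := ENNReal.add_ne_top.mp hinf
  have hdef : OplusDefined k₁ k₂ := (hfst _ _ hA).symm.trans (hAB.trans (hfst _ _ hB))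
  calc _ ≤ d (oplus kA kB) (oplus k₁ k₂) + lam * (g₁ t₁ + g₂ t₂) :=
        iInf₂_le_of_le (oplus k₁ k₂) (t₁, t₂) (iInf_le_of_le ⟨k₁, k₂, h₁, h₂, hdef, rfl⟩ le_rfl)
    _ ≤ (d kA k₁ + d kB k₂) + (lam * g₁ t₁ + lam * g₂ t₂) := by
        rw [mul_add]
        gcongr
        exact hd _ _ _ _
    _ = _ := add_add_add_comm _ _ _ _

lemma dm_par_le (lam : ℝ≥0∞) (S₁ S₂ S₃ S₄ : WMTS Act) (p : S₁.State × S₃.State)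
    (q : S₂.State × S₄.State) :
    dm lam (par S₁ S₃) (par S₂ S₄) p q ≤ dm lam S₁ S₂ p.1 q.1 + dm lam S₃ S₄ p.2 q.2 := by
  suffices h : dm lam (par S₁ S₃) (par S₂ S₄) ≤
      fun p q => dm lam S₁ S₂ p.1 q.1 + dm lam S₃ S₄ p.2 q.2 from h p q
  refine OrderHom.lfp_le _ fun p q => ?_
  refine max_le ?_ ?_
  · refine iSup₂_le fun k t => iSup_le ?_
    rintro ⟨kA, kB, hA, hB, hAB, rfl⟩
    exact (iInf_sync_le_add lam dK dK_oplus_le (fun _ _ => fst_eq_of_dK_ne_top)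
      (S₂.may q.1) (S₄.may q.2)
      (dm lam S₁ S₂ t.1) (dm lam S₃ S₄ t.2) hAB).trans
      (add_le_add (iInf_may_le_dm lam S₁ S₂ hA) (iInf_may_le_dm lam S₃ S₄ hB))
  · refine iSup₂_le fun k t => iSup_le ?_
    rintro ⟨kA, kB, hA, hB, hAB, rfl⟩
    exact (iInf_sync_le_add lam (fun k ℓ => dK ℓ k) (fun k₁ k₂ k₃ k₄ => dK_oplus_le k₂ k₁ k₄ k₃)
      (fun _ _ h => (fst_eq_of_dK_ne_top h).symm) (S₁.must p.1) (S₃.must p.2)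
      (dm lam S₁ S₂ · t.1) (dm lam S₃ S₄ · t.2) hAB).trans
      (add_le_add (iInf_must_le_dm lam S₁ S₂ hA) (iInf_must_le_dm lam S₃ S₄ hB))

theorem independent_implementability_general {Act : Type} (lam : ℝ≥0∞)
    (S₁ S₂ S₃ S₄ : WMTS Act) :
    dmInit lam (par S₁ S₃) (par S₂ S₄) ≤
      dmInit lam S₁ S₂ + dmInit lam S₃ S₄ :=
  dm_par_le lam S₁ S₂ S₃ S₄ _ _

/-- independent implementability:
d_m(S₁∥S₃, S₂∥S₄) ≤ d_m(S₁,S₂) + d_m(S₃,S₄). -/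
theorem independent_implementability {Act : Type} (lam : ℝ≥0∞)
    (hlam0 : 0 < lam) (hlam1 : lam < 1) (S₁ S₂ S₃ S₄ : WMTS Act) :
    dmInit lam (par S₁ S₃) (par S₂ S₄) ≤
      dmInit lam S₁ S₂ + dmInit lam S₃ S₄ :=
  independent_implementability_general lam S₁ S₂ S₃ S₄

end WMTSQuant
end
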